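/- With P_s as in the Searcher's optimal mixed strategy, for every t ∈ {0,...,k}: (∑_{i=1}^{n−1} c_i)·(∑_{i=0}^{t−1} P_i) + V([n−1], k−t)·(∑_{i=t}^k P_i) + c_n·(∑_{i=t+1}^k P_i) = V([n], k), where V([m],j) = T_1([m]) − T_{j+1}([m])/T_j([m]). -/

import Mathlib

/-!
Write `w_s = T_{k-s}([n]) / T_{k-s+1}([n-1])` (`tailWeight`), so that
`P_s = (w_s - w_{s+1}) / w_0` and `w_s = 0` for `s > k`. The three partial sums of `P` then
telescope to `(w_0 - w_t) / w_0`, `w_t / w_0` and `w_{t+1} / w_0`. Peeling off the last variable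
gives `T_j([n]) = T_j([n-1]) + c_n T_{j-1}([n])`, which with `j = k - t` yields
`(T_{j+1}([n-1]) / T_j([n-1])) w_t - c_n w_{t+1} = 1`; this collapses the left-hand side to
`T_1([n-1]) - 1 / w_0`, and the same recurrence at degree `k + 1` identifies that with `V([n], k)`.
-/

/-- Complete homogeneous symmetric polynomial of degree `k` in `c 0, ..., c (n-1)`. -/
noncomputable def T (c : ℕ → ℝ) (n k : ℕ) : ℝ :=
  ∑ x ∈ Finset.Nat.antidiagonalTuple n k, ∏ i : Fin n, c i ^ x i

/-- `T` with integer degree, with the convention `T_j = 0` for `j < 0`. -/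
noncomputable def Tz (c : ℕ → ℝ) (n : ℕ) (k : ℤ) : ℝ :=
  if 0 ≤ k then T c n k.toNat else 0

/-- V([m],j) = T_1([m]) − T_{j+1}([m])/T_j([m]). -/
noncomputable def V (c : ℕ → ℝ) (m j : ℕ) : ℝ := T c m 1 - T c m (j + 1) / T c m j

/-- P_s of the Searcher's optimal mixed strategy. -/
noncomputable def P (c : ℕ → ℝ) (n k s : ℕ) : ℝ :=
  (Tz c n ((k : ℤ) - s) / Tz c (n - 1) ((k : ℤ) - s + 1)
      - Tz c n ((k : ℤ) - s - 1) / Tz c (n - 1) ((k : ℤ) - s))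
    / (Tz c n (k : ℤ) / Tz c (n - 1) ((k : ℤ) + 1))

open Finset

noncomputable def tailWeight (c : ℕ → ℝ) (n k s : ℕ) : ℝ :=
  Tz c n ((k : ℤ) - s) / Tz c (n - 1) ((k : ℤ) - s + 1)

section

variable (c : ℕ → ℝ) (n k : ℕ)

lemma T_zero (m : ℕ) : T c m 0 = 1 := by
  simp [T, Nat.antidiagonalTuple_zero_right]

lemma T_succ_eq_sum_antidiagonal (m d : ℕ) :
    T c (m + 1) d = ∑ p ∈ antidiagonal d, T c m p.1 * c m ^ p.2 := by
  simp only [T, sum_mul]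
  rw [sum_sigma']
  symm
  refine sum_bij' (fun x _ => Fin.snoc x.2 x.1.2)
    (fun y _ => ⟨(∑ i, Fin.init y i, y (Fin.last m)), Fin.init y⟩) ?_ ?_ ?_ ?_ ?_
  · rintro ⟨⟨a, b⟩, x⟩ h
    simp_all [Nat.mem_antidiagonalTuple, Fin.sum_univ_castSucc]
  · intro y hy
    simp_all [Nat.mem_antidiagonalTuple, Fin.sum_univ_castSucc, Fin.init]
  · rintro ⟨⟨a, b⟩, x⟩ h
    simp_all [Nat.mem_antidiagonalTuple]
  · intro y hy
    simp
  · rintro ⟨⟨a, b⟩, x⟩ h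
    simp [Fin.prod_univ_castSucc]

lemma T_succ_succ (m j : ℕ) : T c (m + 1) (j + 1) = T c m (j + 1) + c m * T c (m + 1) j := by
  simp only [T_succ_eq_sum_antidiagonal, Nat.sum_antidiagonal_succ', pow_zero, mul_one,
    pow_succ, mul_sum]
  congr 1
  exact sum_congr rfl fun p _ => by ring

lemma T_one (m : ℕ) : T c m 1 = ∑ i ∈ range m, c i := by
  induction m with
  | zero => simp [T, Nat.antidiagonalTuple_zero_succ]
  | succ m ih => rw [T_succ_succ, T_zero, ih, sum_range_succ, mul_one]

lemma T_pos (hc : ∀ i, 0 < c i) (m j : ℕ) : 0 < T c (m + 1) j :=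
  sum_pos (fun x _ => prod_pos fun i _ => pow_pos (hc i) _)
    ⟨Pi.single 0 j, Nat.mem_antidiagonalTuple.2 (by simp)⟩

@[simp]
lemma Tz_natCast (m a : ℕ) : Tz c m a = T c m a := by
  simp [Tz]

lemma Tz_of_neg (m : ℕ) {i : ℤ} (hi : i < 0) : Tz c m i = 0 :=
  if_neg hi.not_ge

lemma Tz_add_one (m : ℕ) (i : ℤ) :
    Tz c (m + 1) (i + 1) = Tz c m (i + 1) + c m * Tz c (m + 1) i := by
  rcases lt_or_ge i 0 with hi | hi
  · obtain rfl | hi' := eq_or_lt_of_le (Int.le_sub_one_of_lt hi)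
    · simp [Tz, T_zero]
    · simp [Tz_of_neg, hi, show i + 1 < 0 by omega]
  · lift i to ℕ using hi
    exact_mod_cast T_succ_succ c m i

lemma P_eq_tailWeight (s : ℕ) :
    P c n k s = (tailWeight c n k s - tailWeight c n k (s + 1)) / tailWeight c n k 0 := by
  simp only [P, tailWeight]
  push_cast
  ring_nf

lemma tailWeight_of_le {s : ℕ} (hs : s ≤ k) :
    tailWeight c n k s = T c n (k - s) / T c (n - 1) (k - s + 1) := by
  rw [tailWeight, ← Tz_natCast, ← Tz_natCast, Nat.cast_add, Nat.cast_sub hs, Nat.cast_one]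

lemma tailWeight_of_lt {s : ℕ} (hs : k < s) : tailWeight c n k s = 0 := by
  rw [tailWeight, Tz_of_neg c n (by omega), zero_div]

lemma sum_Ico_P {a b : ℕ} (hab : a ≤ b) :
    ∑ s ∈ Ico a b, P c n k s
      = (tailWeight c n k a - tailWeight c n k b) / tailWeight c n k 0 := by
  have htele := sum_Ico_sub (fun s => -tailWeight c n k s) hab
  simp only [sub_neg_eq_add, neg_add_eq_sub] at htele
  simp only [P_eq_tailWeight, ← sum_div, htele]

lemma V_succ (hc : ∀ i, 0 < c i) (m j : ℕ) :
    V c (m + 1) j = T c m 1 - T c m (j + 1) / T c (m + 1) j := by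
  have := (T_pos c hc m j).ne'
  rw [V, T_succ_succ, T_succ_succ, T_zero]
  field_simp
  ring

lemma ratio_mul_tailWeight_sub_mul_tailWeight_succ (hc : ∀ i, 0 < c i) (m t j : ℕ) :
    T c (m + 1) (j + 1) / T c (m + 1) j * tailWeight c (m + 2) (t + j) t
      - c (m + 1) * tailWeight c (m + 2) (t + j) (t + 1) = 1 := by
  have hwt := tailWeight_of_le c (m + 2) (t + j) (Nat.le_add_right t j)
  have hwt1 : tailWeight c (m + 2) (t + j) (t + 1) = Tz c (m + 2) (j - 1) / T c (m + 1) j := by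
    simp [tailWeight]
  have hB : T c (m + 2) j = T c (m + 1) j + c (m + 1) * Tz c (m + 2) (j - 1) := by
    simpa using Tz_add_one c (m + 1) ((j : ℤ) - 1)
  rw [hwt, hwt1, Nat.add_sub_cancel_left, show m + 2 - 1 = m + 1 from rfl, hB]
  have := (T_pos c hc m j).ne'
  have := (T_pos c hc m (j + 1)).ne'
  field_simp
  ring

end

theorem stmt12_general (c : ℕ → ℝ) (hc : ∀ i, 0 < c i) (n k : ℕ) (hn : 2 ≤ n)
    (t : ℕ) (ht : t ≤ k) :
    (∑ i ∈ Finset.range (n - 1), c i) * (∑ i ∈ Finset.range t, P c n k i)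
      + V c (n - 1) (k - t) * (∑ i ∈ Finset.Icc t k, P c n k i)
      + c (n - 1) * (∑ i ∈ Finset.Icc (t + 1) k, P c n k i) = V c n k := by
  obtain ⟨m, rfl⟩ : ∃ m, n = m + 2 := ⟨n - 2, by omega⟩
  obtain ⟨j, rfl⟩ : ∃ j, k = t + j := ⟨k - t, by omega⟩
  have hw0 := tailWeight_of_le c (m + 2) (t + j) (Nat.zero_le _)
  rw [show m + 2 - 1 = m + 1 from rfl, Nat.sub_zero] at hw0
  have hw0_ne : tailWeight c (m + 2) (t + j) 0 ≠ 0 := by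
    rw [hw0]
    exact (div_pos (T_pos c hc (m + 1) _) (T_pos c hc m _)).ne'
  rw [show m + 2 - 1 = m + 1 from rfl, ← T_one, range_eq_Ico, ← Ico_add_one_right_eq_Icc,
    ← Ico_add_one_right_eq_Icc, sum_Ico_P c _ _ (Nat.zero_le t), sum_Ico_P c _ _ (by omega),
    sum_Ico_P c _ _ (by omega), tailWeight_of_lt c _ _ (lt_add_one _), Nat.add_sub_cancel_left]
  set w := tailWeight c (m + 2) (t + j)
  calc _ = T c (m + 1) 1
        - (T c (m + 1) (j + 1) / T c (m + 1) j * w t - c (m + 1) * w (t + 1)) / w 0 := by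
        rw [V]
        field_simp
        ring
    _ = V c (m + 2) (t + j) := by
        rw [ratio_mul_tailWeight_sub_mul_tailWeight_succ c hc, V_succ c hc (m + 1), hw0,
          one_div_div]

/-- the strategy P equalizes the regret. -/
theorem stmt12 (c : ℕ → ℝ) (hc : ∀ i, 0 < c i) (n k : ℕ) (hn : 2 ≤ n) (hk : 1 ≤ k)
    (t : ℕ) (ht : t ≤ k) :
    (∑ i ∈ Finset.range (n - 1), c i) * (∑ i ∈ Finset.range t, P c n k i)
      + V c (n - 1) (k - t) * (∑ i ∈ Finset.Icc t k, P c n k i)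
      + c (n - 1) * (∑ i ∈ Finset.Icc (t + 1) k, P c n k i) = V c n k :=
  stmt12_general c hc n k hn t ht
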